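/- Let g be a Riemannian metric on an open subset of ℝ^d with Christoffel symbols and their partial derivatives up to order n bounded by Γ, satisfying ½|v| ≤ |v|_g ≤ 2|v| pointwise. If x(t) is a smooth curve with |∇^k_{x'}x'|_g ≤ C''_k for all k ≤ n, then there exist constants C'''_k depending only on the C''_j (j ≤ k), Γ, and d, such that the Euclidean derivatives satisfy |x^{(k+1)}(t)| ≤ C'''_k for all k ≤ n. -/

import Mathlib

noncomputable section

variable {d : ℕ}

/-- The `g`-norm `|w|_g = √(gᵢⱼ wⁱ wʲ)` of a vector `w` with respect to the inner product with
coefficient matrix `G`. -/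
def gnorm (G : Matrix (Fin d) (Fin d) ℝ) (w : EuclideanSpace ℝ (Fin d)) : ℝ :=
  Real.sqrt (∑ i, ∑ j, G i j * w i * w j)

/-- Covariant derivative `∇_{x'} v = v' + Γᵏ_{ij} (xⁱ)' vʲ eₖ` of a vector field `v` along a
curve `x`, with respect to the Christoffel symbols `Γ`. -/
def covD (Γ : EuclideanSpace ℝ (Fin d) → Fin d → Fin d → Fin d → ℝ)
    (x : ℝ → EuclideanSpace ℝ (Fin d)) (v : ℝ → EuclideanSpace ℝ (Fin d)) :
    ℝ → EuclideanSpace ℝ (Fin d) := fun t =>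
  (deriv v t) +
    (show EuclideanSpace ℝ (Fin d) from
      WithLp.toLp 2 (fun k => ∑ i, ∑ j, Γ (x t) k i j * deriv (fun s => x s i) t * v t j))

/-- Iterated covariant derivatives of the velocity field of a curve:
`∇⁰_{x'} x' = x'` and `∇^{k+1}_{x'} x' = ∇_{x'} (∇^k_{x'} x')`. -/
def covIter (Γ : EuclideanSpace ℝ (Fin d) → Fin d → Fin d → Fin d → ℝ)
    (x : ℝ → EuclideanSpace ℝ (Fin d)) : ℕ → ℝ → EuclideanSpace ℝ (Fin d)
  | 0 => fun t => deriv x t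
  | (k + 1) => covD Γ x (covIter Γ x k)
variable {d : ℕ}

lemma deriv_comp_proj (x : ℝ → EuclideanSpace ℝ (Fin d)) (hx : Differentiable ℝ x) (i : Fin d)
    (t : ℝ) : deriv (fun s => x s i) t = deriv x t i := by
  have h := ((EuclideanSpace.proj (𝕜 := ℝ) i).hasFDerivAt.comp_hasDerivAt t (hx t).hasDerivAt).deriv
  simpa [Function.comp_def] using h

lemma euclid_decomp (w : EuclideanSpace ℝ (Fin d)) :
    w = ∑ k, w k • EuclideanSpace.single k (1 : ℝ) := by
  ext k'
  rw [show (∑ k, w k • EuclideanSpace.single k (1:ℝ)) k' = ∑ k, (w k • EuclideanSpace.single k (1:ℝ)) k' from by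
    rw [WithLp.ofLp_sum]; exact Finset.sum_apply _ _ _]
  simp [EuclideanSpace.single_apply]

lemma abs_coord_le (w : EuclideanSpace ℝ (Fin d)) (i : Fin d) : |w i| ≤ ‖w‖ := by
  rw [EuclideanSpace.norm_eq]
  rw [show |w i| = Real.sqrt ((w i)^2) from (Real.sqrt_sq_eq_abs _).symm]
  apply Real.sqrt_le_sqrt
  calc (w i)^2 = ‖w i‖^2 := by rw [Real.norm_eq_abs, sq_abs]
    _ ≤ ∑ j, ‖w j‖ ^ 2 :=
      Finset.single_le_sum (f := fun j => ‖w j‖ ^ 2) (fun j _ => sq_nonneg _) (Finset.mem_univ i)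

lemma norm_proj_le (i : Fin d) : ‖EuclideanSpace.proj (𝕜 := ℝ) i‖ ≤ 1 := by
  apply ContinuousLinearMap.opNorm_le_bound _ zero_le_one
  intro w
  rw [one_mul]
  simpa using abs_coord_le w i

lemma clm_itf_bound {F G : Type*} [NormedAddCommGroup F] [NormedSpace ℝ F]
    [NormedAddCommGroup G] [NormedSpace ℝ G] (L : F →L[ℝ] G) {f : ℝ → F} {m i : ℕ}
    (hf : ContDiff ℝ (m : ℕ) f) (him : i ≤ m) (t : ℝ) :
    ‖iteratedFDeriv ℝ i (fun s => L (f s)) t‖ ≤ ‖L‖ * ‖iteratedFDeriv ℝ i f t‖ := by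
  rw [show (fun s => L (f s)) = L ∘ f from rfl,
    L.iteratedFDeriv_comp_left (hf.contDiffAt (x := t)) (by exact_mod_cast him)]
  exact L.norm_compContinuousMultilinearMap_le _

lemma mul_itf_bound {f g : ℝ → ℝ} {m : ℕ} (hf : ContDiff ℝ (m : ℕ) f) (hg : ContDiff ℝ (m : ℕ) g)
    {A B : ℝ} (hB0 : 0 ≤ B)
    (hA : ∀ i ≤ m, ∀ t, ‖iteratedFDeriv ℝ i f t‖ ≤ A)
    (hB : ∀ i ≤ m, ∀ t, ‖iteratedFDeriv ℝ i g t‖ ≤ B) :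
    ∀ i ≤ m, ∀ t, ‖iteratedFDeriv ℝ i (fun s => f s * g s) t‖ ≤ 2 ^ m * A * B := by
  intro i him t
  have hA0 : 0 ≤ A := le_trans (norm_nonneg _) (hA 0 (Nat.zero_le _) t)
  calc ‖iteratedFDeriv ℝ i (fun s => f s * g s) t‖
      ≤ ∑ p ∈ Finset.range (i + 1),
        (i.choose p : ℝ) * ‖iteratedFDeriv ℝ p f t‖ * ‖iteratedFDeriv ℝ (i - p) g t‖ :=
        norm_iteratedFDeriv_mul_le hf hg t (by exact_mod_cast him)
    _ ≤ ∑ p ∈ Finset.range (i + 1), (i.choose p : ℝ) * A * B := by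
        refine Finset.sum_le_sum fun p hp => ?_
        have h1 := hA p (le_trans (Nat.lt_succ_iff.mp (Finset.mem_range.mp hp)) him) t
        have h2 := hB (i - p) (le_trans (Nat.sub_le _ _) him) t
        gcongr
    _ = (2 : ℝ) ^ i * A * B := by
        rw [← Finset.sum_mul, ← Finset.sum_mul, ← Nat.cast_sum, Nat.sum_range_choose]
        push_cast; ring
    _ ≤ 2 ^ m * A * B := by
        have : (2:ℝ)^i ≤ 2^m := pow_le_pow_right₀ one_le_two him
        gcongr

lemma comp_itf_bound {n : ℕ} {U : Set (EuclideanSpace ℝ (Fin d))} (hU : IsOpen U)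
    {γ : EuclideanSpace ℝ (Fin d) → ℝ} (hγ : ContDiffOn ℝ (n : ℕ∞) γ U) {Γb : ℝ}
    (hΓb0 : 0 ≤ Γb) (hb : ∀ m ≤ n, ∀ y ∈ U, ‖iteratedFDerivWithin ℝ m γ U y‖ ≤ Γb)
    {x : ℝ → EuclideanSpace ℝ (Fin d)} (hx : ContDiff ℝ (⊤ : ℕ∞) x) (hxU : ∀ t, x t ∈ U)
    {m : ℕ} (hmn : m ≤ n) {D : ℝ} (hD1 : 1 ≤ D)
    (hxD : ∀ q, 1 ≤ q → q ≤ m → ∀ t, ‖iteratedFDeriv ℝ q x t‖ ≤ D ^ q) :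
    ∀ i ≤ m, ∀ t, ‖iteratedFDeriv ℝ i (fun s => γ (x s)) t‖ ≤ (m.factorial : ℝ) * Γb * D ^ m := by
  intro i him t
  have h1 : ‖iteratedFDerivWithin ℝ i (γ ∘ x) Set.univ t‖ ≤ (i.factorial : ℝ) * Γb * D ^ i := by
    refine norm_iteratedFDerivWithin_comp_le (t := U) (s := Set.univ) hγ
      ((hx.of_le (by exact_mod_cast le_top)).contDiffOn) (by exact_mod_cast le_trans him hmn) hU.uniqueDiffOn
      uniqueDiffOn_univ (fun r _ => hxU r) (Set.mem_univ t) ?_ ?_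
    · exact fun p hp => hb p (le_trans hp (le_trans him hmn)) (x t) (hxU t)
    · intro q hq1 hq2
      rw [iteratedFDerivWithin_univ]
      exact hxD q hq1 (le_trans hq2 him) t
  rw [iteratedFDerivWithin_univ] at h1
  refine le_trans h1 ?_
  have hfac : (i.factorial : ℝ) ≤ (m.factorial : ℝ) := by exact_mod_cast Nat.factorial_le him
  have hpow : D ^ i ≤ D ^ m := pow_le_pow_right₀ hD1 him
  gcongr

/-- Auxiliary: the Christoffel correction term in the covariant derivative. -/
def Qf (Γ : EuclideanSpace ℝ (Fin d) → Fin d → Fin d → Fin d → ℝ)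
    (x : ℝ → EuclideanSpace ℝ (Fin d)) (v : ℝ → EuclideanSpace ℝ (Fin d)) :
    ℝ → EuclideanSpace ℝ (Fin d) := fun t =>
  (show EuclideanSpace ℝ (Fin d) from
    WithLp.toLp 2 (fun k => ∑ i, ∑ j, Γ (x t) k i j * deriv (fun s => x s i) t * v t j))

lemma covIter_succ_eq (Γ : EuclideanSpace ℝ (Fin d) → Fin d → Fin d → Fin d → ℝ)
    (x : ℝ → EuclideanSpace ℝ (Fin d)) (j : ℕ) (t : ℝ) :
    covIter Γ x (j + 1) t = deriv (covIter Γ x j) t + Qf Γ x (covIter Γ x j) t := by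
  simp [covIter, covD, Qf]

lemma Qf_apply (Γ : EuclideanSpace ℝ (Fin d) → Fin d → Fin d → Fin d → ℝ)
    (x v : ℝ → EuclideanSpace ℝ (Fin d)) (t : ℝ) (k : Fin d) :
    Qf Γ x v t k = ∑ i, ∑ j, Γ (x t) k i j * deriv (fun s => x s i) t * v t j := rfl

lemma covIter_zero_eq (Γ : EuclideanSpace ℝ (Fin d) → Fin d → Fin d → Fin d → ℝ)
    (x : ℝ → EuclideanSpace ℝ (Fin d)) : covIter Γ x 0 = deriv x := by
  funext t; simp [covIter]

/-- Configuration for statement 8. -/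
structure Cfg (d n : ℕ) (Γb : ℝ) (C'' : ℕ → ℝ) (U : Set (EuclideanSpace ℝ (Fin d)))
    (Γ : EuclideanSpace ℝ (Fin d) → Fin d → Fin d → Fin d → ℝ)
    (g : EuclideanSpace ℝ (Fin d) → Matrix (Fin d) (Fin d) ℝ)
    (x : ℝ → EuclideanSpace ℝ (Fin d)) : Prop where
  bU : IsOpen U
  bΓs : ∀ k i j, ContDiffOn ℝ (n : ℕ∞) (fun y => Γ y k i j) U
  bΓb : ∀ m ≤ n, ∀ k i j, ∀ y ∈ U, ‖iteratedFDerivWithin ℝ m (fun z => Γ z k i j) U y‖ ≤ Γb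
  bg : ∀ y ∈ U, ∀ w : EuclideanSpace ℝ (Fin d),
    (1 / 2) * ‖w‖ ≤ gnorm (g y) w ∧ gnorm (g y) w ≤ 2 * ‖w‖
  bx : ContDiff ℝ (⊤ : ℕ∞) x
  bxU : ∀ t, x t ∈ U
  bcov : ∀ k ≤ n, ∀ t, gnorm (g (x t)) (covIter Γ x k t) ≤ C'' k

lemma cov_contDiff {n : ℕ} {Γb : ℝ} {C'' : ℕ → ℝ} {U : Set (EuclideanSpace ℝ (Fin d))}
    {Γ : EuclideanSpace ℝ (Fin d) → Fin d → Fin d → Fin d → ℝ}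
    {g : EuclideanSpace ℝ (Fin d) → Matrix (Fin d) (Fin d) ℝ}
    {x : ℝ → EuclideanSpace ℝ (Fin d)} (cfg : Cfg d n Γb C'' U Γ g x) :
    ∀ j ≤ n + 1, ContDiff ℝ ((n + 1 - j : ℕ) : WithTop ℕ∞) (covIter Γ x j) := by
  have hxd : ∀ k : ℕ, ContDiff ℝ (k : WithTop ℕ∞) (deriv x) := by
    intro k
    have := (cfg.bx.of_le (show ((k + 1 : ℕ) : WithTop ℕ∞) ≤ ((⊤ : ℕ∞) : WithTop ℕ∞) by exact_mod_cast le_top))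
    have h := ContDiff.iterate_deriv' k 1 (by exact_mod_cast this)
    simpa using h
  intro j
  induction j with
  | zero =>
    intro _
    rw [covIter_zero_eq]
    exact hxd (n + 1)
  | succ j ih0 =>
    intro hj1
    have hj : j ≤ n := by omega
    have ih := ih0 (by omega)
    have heq : ((n + 1 - j : ℕ) : WithTop ℕ∞) = ((n - j : ℕ) : WithTop ℕ∞) + 1 := by
      have : n + 1 - j = (n - j) + 1 := by omega
      rw [this]; push_cast; ring
    have hder : ContDiff ℝ ((n - j : ℕ) : WithTop ℕ∞) (deriv (covIter Γ x j)) := by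
      have := ih
      rw [heq] at this
      exact (contDiff_succ_iff_deriv.mp this).2.2
    have hQ : ContDiff ℝ ((n - j : ℕ) : WithTop ℕ∞) (Qf Γ x (covIter Γ x j)) := by
      apply contDiff_euclidean.mpr
      intro k
      simp only [Qf_apply]
      apply ContDiff.sum; intro i _
      apply ContDiff.sum; intro l _
      have ha : ContDiff ℝ ((n - j : ℕ) : WithTop ℕ∞) (fun t => Γ (x t) k i l) := by
        have := (cfg.bΓs k i l).comp_contDiff (cfg.bx.of_le (by exact_mod_cast le_top)) cfg.bxU
        exact this.of_le (by norm_cast; exact Nat.cast_le.mpr (Nat.sub_le n j))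
      have hb : ContDiff ℝ ((n - j : ℕ) : WithTop ℕ∞) (fun t => deriv (fun s => x s i) t) := by
        have heq2 : (fun t => deriv (fun s => x s i) t)
            = fun t => EuclideanSpace.proj (𝕜 := ℝ) i (deriv x t) := by
          funext t
          rw [deriv_comp_proj x (cfg.bx.differentiable (by simp)) i t]
          rfl
        rw [heq2]
        exact (EuclideanSpace.proj (𝕜 := ℝ) i).contDiff.comp (hxd _)
      have hc : ContDiff ℝ ((n - j : ℕ) : WithTop ℕ∞) (fun t => covIter Γ x j t l) := by
        have : ContDiff ℝ ((n - j : ℕ) : WithTop ℕ∞) (covIter Γ x j) :=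
          ih.of_le (by exact_mod_cast Nat.sub_le_sub_right (Nat.le_succ n) j)
        exact (EuclideanSpace.proj (𝕜 := ℝ) l).contDiff.comp this
      exact (ha.mul hb).mul hc
    have : covIter Γ x (j + 1) = fun t => deriv (covIter Γ x j) t + Qf Γ x (covIter Γ x j) t := by
      funext t; exact covIter_succ_eq Γ x j t
    rw [this, show ((n + 1 - (j + 1) : ℕ) : WithTop ℕ∞) = ((n - j : ℕ) : WithTop ℕ∞) by rw [Nat.succ_sub_succ]]
    exact hder.add hQ

lemma itf_sum_le {G : Type*} [NormedAddCommGroup G] [NormedSpace ℝ G] {κ : Type*}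
    (s : Finset κ) {f : κ → ℝ → G} {m : ℕ} (hf : ∀ k ∈ s, ContDiff ℝ (m : ℕ) (f k))
    {C : κ → ℝ} (hC : ∀ k ∈ s, ∀ t : ℝ, ‖iteratedFDeriv ℝ m (f k) t‖ ≤ C k) :
    ∀ t : ℝ, ‖iteratedFDeriv ℝ m (fun r => ∑ k ∈ s, f k r) t‖ ≤ ∑ k ∈ s, C k := by
  intro t
  rw [iteratedFDeriv_sum hf]
  rw [Finset.sum_apply]
  exact le_trans (norm_sum_le _ _) (Finset.sum_le_sum fun k hk => hC k hk t)

lemma key (d n : ℕ) (Γb : ℝ) (hΓb : 0 < Γb) (C'' : ℕ → ℝ) :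
    ∀ m j : ℕ, m + j ≤ n → ∃ B : ℝ, 0 ≤ B ∧
      ∀ U Γ g x, Cfg d n Γb C'' U Γ g x → ∀ t : ℝ,
        ‖iteratedFDeriv ℝ m (covIter Γ x j) t‖ ≤ B := by
  intro m
  induction m using Nat.strong_induction_on with
  | _ m IH =>
    match m with
    | 0 =>
      intro j hj
      refine ⟨max (2 * C'' j) 0, le_max_right _ _, fun U Γ g x cfg t => ?_⟩
      rw [norm_iteratedFDeriv_zero]
      have h1 := (cfg.bg (x t) (cfg.bxU t) (covIter Γ x j t)).1
      have h2 := cfg.bcov j (by omega) t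
      have h3 : ‖covIter Γ x j t‖ ≤ 2 * C'' j := by linarith
      exact le_trans h3 (le_max_left _ _)
    | (m + 1) =>
      intro j hj
      obtain ⟨B1, hB10, hB1⟩ := IH m (Nat.lt_succ_self m) (j + 1) (by omega)
      have hEex : ∀ q : ℕ, ∃ B : ℝ, 0 ≤ B ∧ (q ≤ m →
          ∀ U Γ g x, Cfg d n Γb C'' U Γ g x → ∀ t : ℝ,
            ‖iteratedFDeriv ℝ q (covIter Γ x 0) t‖ ≤ B) := by
        intro q
        by_cases h : q ≤ m
        · obtain ⟨B, h0, hB⟩ := IH q (by omega) 0 (by omega)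
          exact ⟨B, h0, fun _ => hB⟩
        · exact ⟨0, le_rfl, fun hq => absurd hq h⟩
      choose Ef hEf0 hEf using hEex
      have hFex : ∀ q : ℕ, ∃ B : ℝ, 0 ≤ B ∧ (q ≤ m →
          ∀ U Γ g x, Cfg d n Γb C'' U Γ g x → ∀ t : ℝ,
            ‖iteratedFDeriv ℝ q (covIter Γ x j) t‖ ≤ B) := by
        intro q
        by_cases h : q ≤ m
        · obtain ⟨B, h0, hB⟩ := IH q (by omega) j (by omega)
          exact ⟨B, h0, fun _ => hB⟩
        · exact ⟨0, le_rfl, fun hq => absurd hq h⟩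
      choose Ff hFf0 hFf using hFex
      set D : ℝ := 1 + ∑ q ∈ Finset.range (m + 1), Ef q with hDdef
      set V : ℝ := 1 + ∑ q ∈ Finset.range (m + 1), Ff q with hVdef
      have hD1 : 1 ≤ D := le_add_of_nonneg_right (Finset.sum_nonneg fun q _ => hEf0 q)
      have hV1 : 1 ≤ V := le_add_of_nonneg_right (Finset.sum_nonneg fun q _ => hFf0 q)
      have hD0 : (0:ℝ) ≤ D := le_trans zero_le_one hD1
      have hV0 : (0:ℝ) ≤ V := le_trans zero_le_one hV1
      have hED : ∀ q ≤ m, Ef q ≤ D := by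
        intro q hq
        have h := Finset.single_le_sum (f := Ef) (fun i _ => hEf0 i)
          (Finset.mem_range.mpr (by omega : q < m + 1))
        rw [hDdef]; linarith
      have hFV : ∀ q ≤ m, Ff q ≤ V := by
        intro q hq
        have h := Finset.single_le_sum (f := Ff) (fun i _ => hFf0 i)
          (Finset.mem_range.mpr (by omega : q < m + 1))
        rw [hVdef]; linarith
      set AΓ : ℝ := (m.factorial : ℝ) * Γb * D ^ m with hAΓdef
      have hAΓ0 : 0 ≤ AΓ :=
        mul_nonneg (mul_nonneg (Nat.cast_nonneg _) hΓb.le) (pow_nonneg hD0 m)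
      set T : ℝ := 2 ^ m * (2 ^ m * AΓ * D) * V with hTdef
      have hT0 : 0 ≤ T :=
        mul_nonneg (mul_nonneg (by positivity)
          (mul_nonneg (mul_nonneg (by positivity) hAΓ0) hD0)) hV0
      refine ⟨B1 + d * (d * (d * T)), add_nonneg hB10
        (mul_nonneg (Nat.cast_nonneg _) (mul_nonneg (Nat.cast_nonneg _)
          (mul_nonneg (Nat.cast_nonneg _) hT0))), fun U Γ g x cfg t => ?_⟩
      have hsm := cov_contDiff cfg
      have hmn : m ≤ n := by omega
      have hxdiff : Differentiable ℝ x := cfg.bx.differentiable (by simp)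
      -- smoothness facts
      have hvm1 : ContDiff ℝ ((m + 1 : ℕ) : WithTop ℕ∞) (covIter Γ x j) := by
        refine (hsm j (by omega)).of_le ?_
        exact_mod_cast (by omega : m + 1 ≤ n + 1 - j)
      have hwm : ContDiff ℝ ((m : ℕ) : WithTop ℕ∞) (covIter Γ x (j + 1)) := by
        refine (hsm (j + 1) (by omega)).of_le ?_
        exact_mod_cast (by omega : m ≤ n + 1 - (j + 1))
      have hvmC : ContDiff ℝ ((m : ℕ) : WithTop ℕ∞) (covIter Γ x j) :=
        hvm1.of_le (by exact_mod_cast (by omega : m ≤ m + 1))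
      have hdv : ContDiff ℝ ((m : ℕ) : WithTop ℕ∞) (deriv (covIter Γ x j)) := by
        have h := hvm1
        rw [show ((m + 1 : ℕ) : WithTop ℕ∞) = ((m : ℕ) : WithTop ℕ∞) + 1 by push_cast; ring] at h
        exact (contDiff_succ_iff_deriv.mp h).2.2
      have hQsm : ContDiff ℝ ((m : ℕ) : WithTop ℕ∞) (Qf Γ x (covIter Γ x j)) := by
        have hrepr : Qf Γ x (covIter Γ x j)
            = fun s => covIter Γ x (j + 1) s - deriv (covIter Γ x j) s := by
          funext s
          exact eq_sub_of_add_eq' (covIter_succ_eq Γ x j s).symm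
        rw [hrepr]
        exact hwm.sub hdv
      have hdxC : ContDiff ℝ ((m : ℕ) : WithTop ℕ∞) (deriv x) := by
        have h0 : ContDiff ℝ ((m + 1 : ℕ) : WithTop ℕ∞) x := cfg.bx.of_le (by exact_mod_cast le_top)
        have h := ContDiff.iterate_deriv' m 1 (by exact_mod_cast h0)
        simpa using h
      have hbeq : ∀ i0 : Fin d, (fun r => deriv (fun u => x u i0) r)
          = fun r => EuclideanSpace.proj (𝕜 := ℝ) i0 (deriv x r) := by
        intro i0; funext r
        rw [deriv_comp_proj x hxdiff i0 r]; rfl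
      have hbC : ∀ i0 : Fin d,
          ContDiff ℝ ((m : ℕ) : WithTop ℕ∞) (fun r => deriv (fun u => x u i0) r) := by
        intro i0
        rw [hbeq i0]
        exact (EuclideanSpace.proj (𝕜 := ℝ) i0).contDiff.comp hdxC
      have haC : ∀ k i0 l : Fin d,
          ContDiff ℝ ((m : ℕ) : WithTop ℕ∞) (fun r => Γ (x r) k i0 l) := by
        intro k i0 l
        have h := (cfg.bΓs k i0 l).comp_contDiff (cfg.bx.of_le (by exact_mod_cast le_top)) cfg.bxU
        exact h.of_le (by exact_mod_cast hmn)
      have hcC : ∀ l : Fin d,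
          ContDiff ℝ ((m : ℕ) : WithTop ℕ∞) (fun r => covIter Γ x j r l) :=
        fun l => (EuclideanSpace.proj (𝕜 := ℝ) l).contDiff.comp hvmC
      -- bounds
      have hxq : ∀ q, 1 ≤ q → q ≤ m → ∀ s : ℝ, ‖iteratedFDeriv ℝ q x s‖ ≤ D ^ q := by
        intro q h1 h2 s
        obtain ⟨r, rfl⟩ : ∃ r, q = r + 1 := ⟨q - 1, by omega⟩
        rw [norm_iteratedFDeriv_eq_norm_iteratedDeriv, iteratedDeriv_succ',
          ← norm_iteratedFDeriv_eq_norm_iteratedDeriv, ← covIter_zero_eq Γ x]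
        calc ‖iteratedFDeriv ℝ r (covIter Γ x 0) s‖ ≤ Ef r := hEf r (by omega) U Γ g x cfg s
          _ ≤ D := hED r (by omega)
          _ ≤ D ^ (r + 1) := le_self_pow₀ hD1 (by omega)
      have hΓc : ∀ k i0 l : Fin d, ∀ i' ≤ m, ∀ s : ℝ,
          ‖iteratedFDeriv ℝ i' (fun r => Γ (x r) k i0 l) s‖ ≤ AΓ := by
        intro k i0 l
        exact comp_itf_bound cfg.bU (cfg.bΓs k i0 l) hΓb.le
          (fun mm h y hy => cfg.bΓb mm h k i0 l y hy) cfg.bx cfg.bxU hmn hD1 hxq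
      have hdvx : ∀ i' ≤ m, ∀ s : ℝ, ‖iteratedFDeriv ℝ i' (deriv x) s‖ ≤ D := by
        intro i' h s
        rw [← covIter_zero_eq Γ x]
        exact le_trans (hEf i' h U Γ g x cfg s) (hED i' h)
      have hbB : ∀ i0 : Fin d, ∀ i' ≤ m, ∀ s : ℝ,
          ‖iteratedFDeriv ℝ i' (fun r => deriv (fun u => x u i0) r) s‖ ≤ D := by
        intro i0 i' h s
        rw [hbeq i0]
        calc ‖iteratedFDeriv ℝ i' (fun r => EuclideanSpace.proj (𝕜 := ℝ) i0 (deriv x r)) s‖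
            ≤ ‖EuclideanSpace.proj (𝕜 := ℝ) i0‖ * ‖iteratedFDeriv ℝ i' (deriv x) s‖ :=
              clm_itf_bound _ hdxC h s
          _ ≤ 1 * D := mul_le_mul (norm_proj_le i0) (hdvx i' h s) (norm_nonneg _) zero_le_one
          _ = D := one_mul D
      have hcB : ∀ l : Fin d, ∀ i' ≤ m, ∀ s : ℝ,
          ‖iteratedFDeriv ℝ i' (fun r => covIter Γ x j r l) s‖ ≤ V := by
        intro l i' h s
        rw [show (fun r => covIter Γ x j r l)
          = fun r => EuclideanSpace.proj (𝕜 := ℝ) l (covIter Γ x j r) from rfl]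
        calc ‖iteratedFDeriv ℝ i'
              (fun r => EuclideanSpace.proj (𝕜 := ℝ) l (covIter Γ x j r)) s‖
            ≤ ‖EuclideanSpace.proj (𝕜 := ℝ) l‖ * ‖iteratedFDeriv ℝ i' (covIter Γ x j) s‖ :=
              clm_itf_bound (EuclideanSpace.proj (𝕜 := ℝ) l) hvmC h s
          _ ≤ 1 * V := mul_le_mul (norm_proj_le l) (le_trans (hFf i' h U Γ g x cfg s)
              (hFV i' h)) (norm_nonneg _) zero_le_one
          _ = V := one_mul V
      have htriple : ∀ k i0 l : Fin d, ∀ i' ≤ m, ∀ s : ℝ,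
          ‖iteratedFDeriv ℝ i' (fun r =>
            Γ (x r) k i0 l * deriv (fun u => x u i0) r * covIter Γ x j r l) s‖ ≤ T := by
        intro k i0 l
        have h1 := mul_itf_bound (haC k i0 l) (hbC i0) hD0 (hΓc k i0 l) (hbB i0)
        exact mul_itf_bound ((haC k i0 l).mul (hbC i0)) (hcC l) hV0 h1 (hcB l)
      have hSkC : ∀ k : Fin d, ContDiff ℝ ((m : ℕ) : WithTop ℕ∞) (fun r =>
          ∑ i0, ∑ l, Γ (x r) k i0 l * deriv (fun u => x u i0) r * covIter Γ x j r l) :=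
        fun k => ContDiff.sum fun i0 _ => ContDiff.sum fun l _ =>
          ((haC k i0 l).mul (hbC i0)).mul (hcC l)
      have hSkB : ∀ k : Fin d, ∀ s : ℝ, ‖iteratedFDeriv ℝ m (fun r =>
          ∑ i0, ∑ l, Γ (x r) k i0 l * deriv (fun u => x u i0) r * covIter Γ x j r l) s‖
            ≤ d * (d * T) := by
        intro k s
        have hinner : ∀ i0 : Fin d, ∀ s : ℝ, ‖iteratedFDeriv ℝ m (fun r =>
            ∑ l, Γ (x r) k i0 l * deriv (fun u => x u i0) r * covIter Γ x j r l) s‖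
              ≤ d * T := by
          intro i0 s
          have h := itf_sum_le Finset.univ
            (f := fun l r => Γ (x r) k i0 l * deriv (fun u => x u i0) r * covIter Γ x j r l)
            (fun l _ => ((haC k i0 l).mul (hbC i0)).mul (hcC l))
            (C := fun _ => T) (fun l _ s => htriple k i0 l m le_rfl s) s
          simpa [Finset.sum_const, Finset.card_univ, nsmul_eq_mul] using h
        have h := itf_sum_le Finset.univ
          (f := fun i0 r =>
            ∑ l, Γ (x r) k i0 l * deriv (fun u => x u i0) r * covIter Γ x j r l)
          (fun i0 _ => ContDiff.sum fun l _ => ((haC k i0 l).mul (hbC i0)).mul (hcC l))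
          (C := fun _ => d * T) (fun i0 _ s => hinner i0 s) s
        simpa [Finset.sum_const, Finset.card_univ, nsmul_eq_mul] using h
      have hQrepr : Qf Γ x (covIter Γ x j) = fun r => ∑ k,
          (∑ i0, ∑ l, Γ (x r) k i0 l * deriv (fun u => x u i0) r * covIter Γ x j r l)
            • EuclideanSpace.single k (1:ℝ) := by
        funext r
        conv_lhs => rw [euclid_decomp (Qf Γ x (covIter Γ x j) r)]
        rfl
      have hsmulC : ∀ k : Fin d, ContDiff ℝ ((m : ℕ) : WithTop ℕ∞) (fun r =>
          (∑ i0, ∑ l, Γ (x r) k i0 l * deriv (fun u => x u i0) r * covIter Γ x j r l)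
            • EuclideanSpace.single k (1:ℝ)) :=
        fun k => (hSkC k).smul contDiff_const
      have hQb : ‖iteratedFDeriv ℝ m (Qf Γ x (covIter Γ x j)) t‖ ≤ d * (d * (d * T)) := by
        rw [hQrepr]
        refine le_trans (itf_sum_le Finset.univ (fun k _ => hsmulC k)
          (C := fun _ => d * (d * T)) ?_ t) ?_
        · intro k _ s
          have heqv : (fun r =>
              (∑ i0, ∑ l, Γ (x r) k i0 l * deriv (fun u => x u i0) r * covIter Γ x j r l)
                • EuclideanSpace.single k (1:ℝ))
              = fun r => (ContinuousLinearMap.toSpanSingleton ℝ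
                  (EuclideanSpace.single k (1:ℝ)))
                (∑ i0, ∑ l, Γ (x r) k i0 l * deriv (fun u => x u i0) r
                  * covIter Γ x j r l) := by
            funext r
            simp only [ContinuousLinearMap.toSpanSingleton_apply]
          rw [heqv]
          calc ‖iteratedFDeriv ℝ m (fun r => (ContinuousLinearMap.toSpanSingleton ℝ
                  (EuclideanSpace.single k (1:ℝ)))
                (∑ i0, ∑ l, Γ (x r) k i0 l * deriv (fun u => x u i0) r
                  * covIter Γ x j r l)) s‖
              ≤ ‖ContinuousLinearMap.toSpanSingleton ℝ (EuclideanSpace.single k (1:ℝ))‖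
                * ‖iteratedFDeriv ℝ m (fun r =>
                  ∑ i0, ∑ l, Γ (x r) k i0 l * deriv (fun u => x u i0) r
                    * covIter Γ x j r l) s‖ := clm_itf_bound _ (hSkC k) le_rfl s
            _ ≤ 1 * (d * (d * T)) := by
                have hn1 : ‖ContinuousLinearMap.toSpanSingleton ℝ
                    (EuclideanSpace.single k (1:ℝ))‖ = 1 := by
                  rw [ContinuousLinearMap.norm_toSpanSingleton, EuclideanSpace.norm_single]
                  simp
                rw [hn1]
                exact mul_le_mul le_rfl (hSkB k s) (norm_nonneg _) zero_le_one
            _ = d * (d * T) := one_mul _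
        · rw [Finset.sum_const, Finset.card_univ, Fintype.card_fin]
          simp [nsmul_eq_mul]
      calc ‖iteratedFDeriv ℝ (m + 1) (covIter Γ x j) t‖
          = ‖iteratedFDeriv ℝ m (deriv (covIter Γ x j)) t‖ := by
            rw [norm_iteratedFDeriv_eq_norm_iteratedDeriv, iteratedDeriv_succ',
              ← norm_iteratedFDeriv_eq_norm_iteratedDeriv]
        _ = ‖iteratedFDeriv ℝ m (fun s =>
              covIter Γ x (j + 1) s - Qf Γ x (covIter Γ x j) s) t‖ := by
            have hder : deriv (covIter Γ x j)
                = fun s => covIter Γ x (j + 1) s - Qf Γ x (covIter Γ x j) s := by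
              funext s
              exact eq_sub_of_add_eq (covIter_succ_eq Γ x j s).symm
            rw [hder]
        _ = ‖iteratedFDeriv ℝ m (covIter Γ x (j + 1)) t
              - iteratedFDeriv ℝ m (Qf Γ x (covIter Γ x j)) t‖ := by
            congr 1
            simp only [sub_eq_add_neg]
            rw [iteratedFDeriv_add_apply' (hwm.contDiffAt (x := t)) (hQsm.neg.contDiffAt (x := t))]
            congr 1
            exact iteratedFDeriv_neg_apply
        _ ≤ ‖iteratedFDeriv ℝ m (covIter Γ x (j + 1)) t‖
              + ‖iteratedFDeriv ℝ m (Qf Γ x (covIter Γ x j)) t‖ := norm_sub_le _ _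
        _ ≤ B1 + d * (d * (d * T)) := add_le_add (hB1 U Γ g x cfg t) hQb
/-- If the Christoffel symbols of `g` and their partial derivatives up to
order `n` are bounded by `Γb` on `U`, `½|v| ≤ |v|_g ≤ 2|v|` pointwise, and `x(t)` is a smooth
curve in `U` whose iterated covariant derivatives satisfy `|∇^k_{x'} x'|_g ≤ C'' k` for
`k ≤ n`, then there are constants `C''' k`, depending only on `C''`, `Γb` and `d`, with
`|x^{(k+1)}(t)| ≤ C''' k` for all `k ≤ n`. -/
theorem stmt_8 (d n : ℕ) (Γb : ℝ) (hΓb : 0 < Γb) (C'' : ℕ → ℝ) :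
    ∃ C''' : ℕ → ℝ,
      ∀ (U : Set (EuclideanSpace ℝ (Fin d))), IsOpen U →
      ∀ (Γ : EuclideanSpace ℝ (Fin d) → Fin d → Fin d → Fin d → ℝ),
        (∀ k i j, ContDiffOn ℝ (n : ℕ∞) (fun y => Γ y k i j) U) →
        (∀ m ≤ n, ∀ k i j, ∀ y ∈ U,
          ‖iteratedFDerivWithin ℝ m (fun z => Γ z k i j) U y‖ ≤ Γb) →
      ∀ (g : EuclideanSpace ℝ (Fin d) → Matrix (Fin d) (Fin d) ℝ),
        (∀ y ∈ U, ∀ w : EuclideanSpace ℝ (Fin d),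
          (1 / 2) * ‖w‖ ≤ gnorm (g y) w ∧ gnorm (g y) w ≤ 2 * ‖w‖) →
      ∀ (x : ℝ → EuclideanSpace ℝ (Fin d)), ContDiff ℝ (⊤ : ℕ∞) x →
        (∀ t : ℝ, x t ∈ U) →
        (∀ k ≤ n, ∀ t : ℝ, gnorm (g (x t)) (covIter Γ x k t) ≤ C'' k) →
        ∀ k ≤ n, ∀ t : ℝ, ‖iteratedDeriv (k + 1) x t‖ ≤ C''' k := by
  have KK : ∀ k : ℕ, ∃ B : ℝ, 0 ≤ B ∧ (k ≤ n →
      ∀ U Γ g x, Cfg d n Γb C'' U Γ g x → ∀ t : ℝ,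
        ‖iteratedFDeriv ℝ k (covIter Γ x 0) t‖ ≤ B) := by
    intro k
    by_cases h : k ≤ n
    · obtain ⟨B, h0, hB⟩ := key d n Γb hΓb C'' k 0 (by omega)
      exact ⟨B, h0, fun _ => hB⟩
    · exact ⟨0, le_rfl, fun hk => absurd hk h⟩
  choose B hB0 hB using KK
  refine ⟨B, ?_⟩
  intro U hU Γ hΓs hΓb' g hg x hx hxU hcov k hk t
  have cfg : Cfg d n Γb C'' U Γ g x := ⟨hU, hΓs, hΓb', hg, hx, hxU, hcov⟩
  have h := hB k hk U Γ g x cfg t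
  calc ‖iteratedDeriv (k + 1) x t‖ = ‖iteratedDeriv k (deriv x) t‖ := by
        rw [iteratedDeriv_succ']
    _ = ‖iteratedFDeriv ℝ k (deriv x) t‖ := (norm_iteratedFDeriv_eq_norm_iteratedDeriv).symm
    _ = ‖iteratedFDeriv ℝ k (covIter Γ x 0) t‖ := by rw [covIter_zero_eq]
    _ ≤ B k := h
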